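/- arXiv:1605.08597 — 5 statements merged into one kernel-verified Lean document; each statement's English description precedes it below -/
import Mathlib

section
/- The number of labelled trees on n vertices is n^(n-2) for all n ≥ 1 (Cayley's formula). -/
/-!
Prüfer's bijection. Deleting the smallest leaf of a tree on `k + 2` vertices and recording its
neighbour, `k` times, gives a sequence of length `k` in the vertex set. A vertex occurs in this
sequence exactly when it is not a leaf, so the first deleted leaf is the smallest vertex missing
from the sequence; hence the tree can be rebuilt leaf by leaf from its code, and the code is a
bijection onto all `(k + 2) ^ k` sequences of length `k`.
-/

open Finset
open SimpleGraph (fromEdgeSet)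

theorem SimpleGraph.Reachable.map_of_adj {V W : Type*} {G : SimpleGraph V} {H : SimpleGraph W}
    (f : V → W) (hf : ∀ a b, G.Adj a b → H.Reachable (f a) (f b)) {u v : V}
    (h : G.Reachable u v) : H.Reachable (f u) (f v) := by
  rw [SimpleGraph.reachable_iff_reflTransGen] at h ⊢
  exact Relation.ReflTransGen.lift' f
    (fun a b hab => (SimpleGraph.reachable_iff_reflTransGen _ _).1 (hf a b hab)) _ _ h

namespace Prufer

variable {α : Type*} {S : Finset α} {E E₁ E₂ : Finset (Sym2 α)} {e f : Sym2 α}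
  {a m u v : α} {k : ℕ}

-- Trees live inside an ambient type, so that deleting a leaf does not change the vertex type.
structure IsTreeOn (S : Finset α) (E : Finset (Sym2 α)) : Prop where
  mem_of_mem_edge : ∀ e ∈ E, ∀ x ∈ e, x ∈ S
  not_isDiag : ∀ e ∈ E, ¬ e.IsDiag
  reachable : ∀ u ∈ S, ∀ v ∈ S, (fromEdgeSet (E : Set (Sym2 α))).Reachable u v
  card_add_one : #E + 1 = #S

lemma isTreeOn_singleton (a : α) : IsTreeOn {a} ∅ where
  mem_of_mem_edge := by simp
  not_isDiag := by simp
  reachable u hu v hv := by simp_all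
  card_add_one := rfl

lemma IsTreeOn.ne_of_mk_mem (hT : IsTreeOn S E) (h : s(u, v) ∈ E) : u ≠ v := by
  simpa using hT.not_isDiag _ h

section DecidableEq

variable [DecidableEq α]

def degree (E : Finset (Sym2 α)) (v : α) : ℕ := #{e ∈ E | v ∈ e}

lemma degree_erase_of_mem (he : e ∈ E) (hv : v ∈ e) :
    degree (E.erase e) v = degree E v - 1 := by
  rw [degree, degree, filter_erase, card_erase_of_mem (mem_filter.2 ⟨he, hv⟩)]

lemma degree_erase_of_not_mem (hv : v ∉ e) : degree (E.erase e) v = degree E v := by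
  rw [degree, degree, filter_erase, erase_eq_of_notMem]
  exact fun h => hv (mem_filter.1 h).2

lemma degree_insert_of_mem (he : e ∉ E) (hv : v ∈ e) :
    degree (insert e E) v = degree E v + 1 := by
  rw [degree, degree, filter_insert, if_pos hv, card_insert_of_notMem]
  exact fun h => he (mem_filter.1 h).1

lemma degree_insert_of_not_mem (hv : v ∉ e) : degree (insert e E) v = degree E v := by
  rw [degree, degree, filter_insert, if_neg hv]

lemma degree_eq_zero (hv : ∀ e ∈ E, v ∉ e) : degree E v = 0 := by
  simpa [degree, filter_eq_empty_iff] using hv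

lemma eq_of_degree_eq_one (hv : degree E v = 1) (he : e ∈ E) (hf : f ∈ E) (hve : v ∈ e)
    (hvf : v ∈ f) : e = f :=
  card_le_one.1 hv.le _ (mem_filter.2 ⟨he, hve⟩) _ (mem_filter.2 ⟨hf, hvf⟩)

lemma exists_mk_mem_of_degree_pos (hv : 0 < degree E v) : ∃ u, s(v, u) ∈ E := by
  obtain ⟨e, he⟩ := card_pos.1 hv
  obtain ⟨heE, hve⟩ := mem_filter.1 he
  exact ⟨Sym2.Mem.other hve, (Sym2.other_spec hve).symm ▸ heE⟩

lemma sum_degree (hS : ∀ e ∈ E, ∀ x ∈ e, x ∈ S) (hE : ∀ e ∈ E, ¬ e.IsDiag) :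
    ∑ v ∈ S, degree E v = 2 * #E := by
  have hcard : ∀ e ∈ E, #{v ∈ S | v ∈ e} = 2 := fun e he => by
    rw [← Sym2.card_toFinset_of_not_isDiag e (hE e he)]
    congr 1
    ext x
    simpa using fun hx => hS e he x hx
  calc ∑ v ∈ S, degree E v = ∑ e ∈ E, #{v ∈ S | v ∈ e} :=
        sum_card_bipartiteAbove_eq_sum_card_bipartiteBelow (fun v e => v ∈ e)
    _ = 2 * #E := by rw [sum_congr rfl hcard, sum_const, smul_eq_mul, mul_comm]

noncomputable def neighbor (E : Finset (Sym2 α)) (v : α) : α :=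
  @Classical.epsilon α ⟨v⟩ fun u => s(v, u) ∈ E

lemma mk_neighbor_mem (hv : 0 < degree E v) : s(v, neighbor E v) ∈ E :=
  Classical.epsilon_spec (exists_mk_mem_of_degree_pos hv)

lemma neighbor_eq (hv : degree E v = 1) (hu : s(v, u) ∈ E) : neighbor E v = u :=
  Sym2.congr_right.1 <| eq_of_degree_eq_one hv (mk_neighbor_mem (by omega)) hu (by simp) (by simp)

def leaves (S : Finset α) (E : Finset (Sym2 α)) : Finset α := {v ∈ S | degree E v = 1}

namespace IsTreeOn

lemma degree_pos (hT : IsTreeOn S E) (hS : 2 ≤ #S) (hv : v ∈ S) : 0 < degree E v := by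
  obtain ⟨u, hu, huv⟩ := exists_mem_ne hS v
  obtain ⟨p⟩ := hT.reachable v hv u hu
  cases p with
  | nil => exact absurd rfl huv
  | cons hadj _ =>
    exact card_pos.2 ⟨_, mem_filter.2 ⟨((SimpleGraph.fromEdgeSet_adj _).1 hadj).1, by simp⟩⟩

lemma exists_degree_eq_one (hT : IsTreeOn S E) (hS : 2 ≤ #S) : ∃ v ∈ S, degree E v = 1 := by
  by_contra! h
  have h2 : ∑ _v ∈ S, 2 ≤ ∑ v ∈ S, degree E v := sum_le_sum fun v hv => by
    have := hT.degree_pos hS hv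
    have := h v hv
    omega
  rw [sum_const, smul_eq_mul, sum_degree hT.mem_of_mem_edge hT.not_isDiag] at h2
  have := hT.card_add_one
  omega

lemma erase_leaf (hT : IsTreeOn S E) (hm : degree E m = 1) (hma : s(m, a) ∈ E) :
    IsTreeOn (S.erase m) (E.erase s(m, a)) where
  mem_of_mem_edge e he x hx := by
    obtain ⟨hne, heE⟩ := mem_erase.1 he
    refine mem_erase.2 ⟨?_, hT.mem_of_mem_edge e heE x hx⟩
    rintro rfl
    exact hne (eq_of_degree_eq_one hm heE hma hx (by simp))
  not_isDiag e he := hT.not_isDiag e (mem_of_mem_erase he)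
  reachable u hu v hv := by
    have hleaf : ∀ z, s(m, z) ∈ E → z = a := fun z hz =>
      Sym2.congr_right.1 (eq_of_degree_eq_one hm hz hma (by simp) (by simp))
    -- contracting the edge `s(m, a)` maps walks of the tree to walks avoiding it
    have hcollapse : ∀ x y, (fromEdgeSet (E : Set (Sym2 α))).Adj x y →
        (fromEdgeSet ((E.erase s(m, a) : Finset _) : Set (Sym2 α))).Reachable
          (if x = m then a else x) (if y = m then a else y) := by
      intro x y hxy
      obtain ⟨hxyE, hne⟩ := (SimpleGraph.fromEdgeSet_adj _).1 hxy
      by_cases hx : x = m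
      · subst hx
        simp [hleaf y hxyE]
      by_cases hy : y = m
      · subst hy
        simp [hleaf x (Sym2.eq_swap ▸ hxyE)]
      refine SimpleGraph.Adj.reachable ?_
      simp only [hx, hy, if_false, SimpleGraph.fromEdgeSet_adj, coe_erase, Set.mem_sdiff, mem_coe,
        Set.mem_singleton_iff]
      refine ⟨⟨hxyE, fun h => ?_⟩, hne⟩
      rcases Sym2.mem_iff.1 (h ▸ Sym2.mem_mk_left m a : m ∈ s(x, y)) with h | h
      exacts [hx h.symm, hy h.symm]
    simpa [ne_of_mem_erase hu, ne_of_mem_erase hv] using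
      (hT.reachable u (mem_of_mem_erase hu) v (mem_of_mem_erase hv)).map_of_adj _ hcollapse
  card_add_one := by
    have := hT.card_add_one
    have := card_pos.2 ⟨_, hma⟩
    rw [card_erase_of_mem hma, card_erase_of_mem (hT.mem_of_mem_edge _ hma m (by simp))]
    omega

lemma insert_leaf (hT : IsTreeOn S E) (ha : a ∈ S) (hm : m ∉ S) :
    IsTreeOn (insert m S) (insert s(m, a) E) where
  mem_of_mem_edge e he x hx := by
    rcases mem_insert.1 he with rfl | he
    · rcases Sym2.mem_iff.1 hx with rfl | rfl <;> simp [ha]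
    · exact mem_insert_of_mem (hT.mem_of_mem_edge e he x hx)
  not_isDiag e he := by
    rcases mem_insert.1 he with rfl | he
    · simpa using (ne_of_mem_of_not_mem ha hm).symm
    · exact hT.not_isDiag e he
  reachable := by
    have hma : (fromEdgeSet ((insert s(m, a) E : Finset _) : Set (Sym2 α))).Reachable m a :=
      SimpleGraph.Adj.reachable (by simpa using (ne_of_mem_of_not_mem ha hm).symm)
    have hS : ∀ u ∈ S, ∀ v ∈ S,
        (fromEdgeSet ((insert s(m, a) E : Finset _) : Set (Sym2 α))).Reachable u v :=
      fun u hu v hv => (hT.reachable u hu v hv).mono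
        (SimpleGraph.fromEdgeSet_mono (by simp [Set.subset_insert]))
    intro u hu v hv
    rcases mem_insert.1 hu with rfl | huS <;> rcases mem_insert.1 hv with rfl | hvS
    · rfl
    · exact hma.trans (hS a ha v hvS)
    · exact (hS u huS a ha).trans hma.symm
    · exact hS u huS v hvS
  card_add_one := by
    rw [card_insert_of_notMem (fun h => hm (hT.mem_of_mem_edge _ h m (by simp))),
      card_insert_of_notMem hm, hT.card_add_one]

lemma degree_ne_one_of_leaf (hT : IsTreeOn S E) (hS : 3 ≤ #S) (hm : degree E m = 1)
    (hma : s(m, a) ∈ E) : degree E a ≠ 1 := by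
  have hmS : m ∈ S := hT.mem_of_mem_edge _ hma m (by simp)
  have haS : a ∈ S.erase m :=
    mem_erase.2 ⟨(hT.ne_of_mk_mem hma).symm, hT.mem_of_mem_edge _ hma a (by simp)⟩
  have := (hT.erase_leaf hm hma).degree_pos (by rw [card_erase_of_mem hmS]; omega) haS
  rw [degree_erase_of_mem hma (by simp)] at this
  omega

lemma eq_singleton_of_pair {b : α} (hT : IsTreeOn {a, b} E) (hab : a ≠ b) : E = {s(a, b)} := by
  have := hT.card_add_one
  rw [card_pair hab] at this
  obtain ⟨e, rfl⟩ := card_eq_one.1 (by omega : #E = 1)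
  have he := mem_singleton_self e
  induction e with
  | h x y =>
    have hx := hT.mem_of_mem_edge _ he x (by simp)
    have hy := hT.mem_of_mem_edge _ he y (by simp)
    have hxy := hT.ne_of_mk_mem he
    simp only [mem_insert, mem_singleton] at hx hy
    rcases hx with rfl | rfl <;> rcases hy with rfl | rfl <;> simp_all [Sym2.eq_swap]

lemma leaves_insert_leaf (hT : IsTreeOn S E) (hS : 2 ≤ #S) (ha : a ∈ S) (hm : m ∉ S) :
    leaves (insert m S) (insert s(m, a) E) = insert m ((leaves S E).erase a) := by
  have hnew : s(m, a) ∉ E := fun h => hm (hT.mem_of_mem_edge _ h m (by simp))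
  ext v
  by_cases hvm : v = m
  · subst hvm
    have : degree E v = 0 := degree_eq_zero fun e he hve => hm (hT.mem_of_mem_edge e he v hve)
    simp [leaves, degree_insert_of_mem hnew, this]
  by_cases hva : v = a
  · subst hva
    have := hT.degree_pos hS ha
    simp [leaves, degree_insert_of_mem hnew (Sym2.mem_mk_right m v), hvm]
    omega
  · simp [leaves, degree_insert_of_not_mem (by simp [hvm, hva] : v ∉ s(m, a)), hvm, hva]

end IsTreeOn

lemma isTreeOn_pair {b : α} (hab : a ≠ b) : IsTreeOn {a, b} {s(a, b)} := by
  simpa using (isTreeOn_singleton b).insert_leaf (mem_singleton_self b) (by simpa using hab)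

end DecidableEq

section LinearOrder

variable [LinearOrder α]

-- The Prüfer code of a tree on `k + 2` vertices is `code k`: the fuel `k` counts deleted leaves.
noncomputable def code : ℕ → Finset α → Finset (Sym2 α) → List α
  | 0, _, _ => []
  | k + 1, S, E =>
    if h : (leaves S E).Nonempty then
      let m := (leaves S E).min' h
      neighbor E m :: code k (S.erase m) (E.erase s(m, neighbor E m))
    else []

lemma code_succ (hm : IsLeast (leaves S E : Set α) m) :
    code (k + 1) S E = neighbor E m :: code k (S.erase m) (E.erase s(m, neighbor E m)) := by
  have h : (leaves S E).Nonempty := ⟨m, hm.1⟩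
  rw [code, dif_pos h, ((leaves S E).isLeast_min' h).unique hm]

lemma IsTreeOn.exists_isLeast_leaves (hT : IsTreeOn S E) (hS : 2 ≤ #S) :
    ∃ m, IsLeast (leaves S E : Set α) m := by
  obtain ⟨v, hvS, hv⟩ := hT.exists_degree_eq_one hS
  exact ⟨_, (leaves S E).isLeast_min' ⟨v, mem_filter.2 ⟨hvS, hv⟩⟩⟩

lemma IsTreeOn.length_code (hT : IsTreeOn S E) (hS : #S = k + 2) : (code k S E).length = k := by
  induction k generalizing S E with
  | zero => rfl
  | succ k ih =>
    obtain ⟨m, hm⟩ := hT.exists_isLeast_leaves (by omega)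
    obtain ⟨hmS, hmdeg⟩ := mem_filter.1 hm.1
    have hT' := hT.erase_leaf hmdeg (mk_neighbor_mem (by omega))
    rw [code_succ hm, List.length_cons, ih hT' (by rw [card_erase_of_mem hmS]; omega)]

lemma IsTreeOn.mem_code_iff (hT : IsTreeOn S E) (hS : #S = k + 2) :
    v ∈ code k S E ↔ v ∈ S ∧ degree E v ≠ 1 := by
  induction k generalizing S E with
  | zero =>
    obtain ⟨x, y, hxy, rfl⟩ := card_eq_two.1 hS
    rw [hT.eq_singleton_of_pair hxy]
    simp only [code, List.not_mem_nil, false_iff, not_and, not_not, mem_insert, mem_singleton]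
    rintro (rfl | rfl) <;> simp [degree, filter_singleton]
  | succ k ih =>
    obtain ⟨m, hm⟩ := hT.exists_isLeast_leaves (by omega)
    obtain ⟨hmS, hmdeg⟩ := mem_filter.1 hm.1
    have hmj : s(m, neighbor E m) ∈ E := mk_neighbor_mem (by omega)
    rw [code_succ hm, List.mem_cons,
      ih (hT.erase_leaf hmdeg hmj) (by rw [card_erase_of_mem hmS]; omega)]
    set j := neighbor E m
    have hjS : j ∈ S := hT.mem_of_mem_edge _ hmj j (by simp)
    have hjm : j ≠ m := (hT.ne_of_mk_mem hmj).symm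
    by_cases hvm : v = m
    · subst hvm
      simp [hjm.symm, hmdeg]
    by_cases hvj : v = j
    · subst hvj
      simp [hjS, hT.degree_ne_one_of_leaf (by omega) hmdeg hmj]
    rw [degree_erase_of_not_mem (by simp [hvm, hvj])]
    simp [hvm, hvj]

lemma IsTreeOn.leaves_eq_sdiff_code (hT : IsTreeOn S E) (hS : #S = k + 2) :
    leaves S E = S \ (code k S E).toFinset := by
  ext v
  simp only [leaves, mem_filter, mem_sdiff, List.mem_toFinset, hT.mem_code_iff hS]
  tauto

lemma IsTreeOn.eq_of_code_eq (h₁ : IsTreeOn S E₁) (h₂ : IsTreeOn S E₂) (hS : #S = k + 2)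
    (h : code k S E₁ = code k S E₂) : E₁ = E₂ := by
  induction k generalizing S E₁ E₂ with
  | zero =>
    obtain ⟨x, y, hxy, rfl⟩ := card_eq_two.1 hS
    rw [h₁.eq_singleton_of_pair hxy, h₂.eq_singleton_of_pair hxy]
  | succ k ih =>
    obtain ⟨m, hm₁⟩ := h₁.exists_isLeast_leaves (by omega)
    have hm₂ : IsLeast (leaves S E₂ : Set α) m := by
      rwa [h₂.leaves_eq_sdiff_code hS, ← h, ← h₁.leaves_eq_sdiff_code hS]
    obtain ⟨hmS, hdeg₁⟩ := mem_filter.1 hm₁.1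
    have hdeg₂ : degree E₂ m = 1 := (mem_filter.1 hm₂.1).2
    rw [code_succ hm₁, code_succ hm₂, List.cons.injEq] at h
    obtain ⟨hj, h⟩ := h
    have hmem₁ : s(m, neighbor E₁ m) ∈ E₁ := mk_neighbor_mem (by omega)
    have hmem₂ : s(m, neighbor E₁ m) ∈ E₂ := hj ▸ mk_neighbor_mem (by omega)
    rw [← hj] at h
    have := ih (h₁.erase_leaf hdeg₁ hmem₁) (h₂.erase_leaf hdeg₂ hmem₂)
      (by rw [card_erase_of_mem hmS]; omega) h
    rw [← insert_erase hmem₁, ← insert_erase hmem₂, this]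

lemma exists_isTreeOn_code_eq (l : List α) (hl : ∀ x ∈ l, x ∈ S) (hS : #S = l.length + 2) :
    ∃ E, IsTreeOn S E ∧ code l.length S E = l := by
  induction l generalizing S with
  | nil =>
    obtain ⟨x, y, hxy, rfl⟩ := card_eq_two.1 hS
    exact ⟨_, isTreeOn_pair hxy, rfl⟩
  | cons a l ih =>
    set R := S \ (a :: l).toFinset
    have hR : R.Nonempty := by
      rw [nonempty_iff_ne_empty, Ne, sdiff_eq_empty_iff_subset]
      intro hsub
      have := card_le_card hsub
      have := (a :: l).toFinset_card_le
      simp only [List.length_cons] at hS this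
      omega
    obtain ⟨m, hmR⟩ : ∃ m, IsLeast (R : Set α) m := ⟨_, R.isLeast_min' hR⟩
    obtain ⟨hmS, hml⟩ := mem_sdiff.1 hmR.1
    rw [List.mem_toFinset, List.mem_cons, not_or] at hml
    have hS' : #(S.erase m) = l.length + 2 := by
      rw [card_erase_of_mem hmS, hS, List.length_cons]
      rfl
    obtain ⟨E', hT', hcode⟩ := ih (fun x hx => mem_erase.2
      ⟨by rintro rfl; exact hml.2 hx, hl x (List.mem_cons_of_mem _ hx)⟩) hS'
    have haS' : a ∈ S.erase m := mem_erase.2 ⟨Ne.symm hml.1, hl a List.mem_cons_self⟩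
    have hT := hT'.insert_leaf haS' (notMem_erase m S)
    have hleaves := hT'.leaves_insert_leaf (by omega) haS' (notMem_erase m S)
    rw [insert_erase hmS] at hT hleaves
    rw [hT'.leaves_eq_sdiff_code hS', hcode] at hleaves
    have hR' : leaves S (insert s(m, a) E') = R := by
      rw [hleaves]
      ext v
      by_cases hvm : v = m
      · subst hvm
        simp [R, hmS, hml.1, hml.2]
      · simp [R, hvm]
        tauto
    have hmin : IsLeast (leaves S (insert s(m, a) E') : Set α) m := hR' ▸ hmR
    have hnb : neighbor (insert s(m, a) E') m = a :=
      neighbor_eq (mem_filter.1 hmin.1).2 (mem_insert_self _ _)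
    have hnew : s(m, a) ∉ E' := fun h => notMem_erase m S (hT'.mem_of_mem_edge _ h m (by simp))
    refine ⟨_, hT, ?_⟩
    rw [List.length_cons, code_succ hmin, hnb, erase_insert hnew, hcode]

end LinearOrder

lemma card_lists_of_length_mem (S : Finset α) (k : ℕ) :
    Nat.card {l : List α // l.length = k ∧ ∀ x ∈ l, x ∈ S} = #S ^ k := by
  have : Function.Bijective fun v : List.Vector S k =>
      (⟨v.1.map (↑), by simp, fun x hx => by
        obtain ⟨y, -, rfl⟩ := List.mem_map.1 hx
        exact y.2⟩ : {l : List α // l.length = k ∧ ∀ x ∈ l, x ∈ S}) := by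
    constructor
    · intro v w h
      exact Subtype.ext (List.map_injective_iff.2 Subtype.val_injective (congrArg Subtype.val h))
    · rintro ⟨l, hl, hS⟩
      lift l to List S using hS
      exact ⟨⟨l, by simpa using hl⟩, rfl⟩
  rw [← Nat.card_eq_of_bijective _ this, Nat.card_eq_fintype_card, card_vector, Fintype.card_coe]

theorem card_isTreeOn [LinearOrder α] (hS : S.Nonempty) :
    Nat.card {E // IsTreeOn S E} = #S ^ (#S - 2) := by
  obtain ⟨a, rfl⟩ | ⟨k, hk⟩ : (∃ a, S = {a}) ∨ ∃ k, #S = k + 2 := by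
    rcases Nat.lt_or_ge #S 2 with h | h
    · exact Or.inl (card_eq_one.1 (by have := hS.card_pos; omega))
    · exact Or.inr ⟨#S - 2, by omega⟩
  · have : ∀ E, IsTreeOn {a} E ↔ E = ∅ := fun E =>
      ⟨fun h => card_eq_zero.1 (by simpa using h.card_add_one),
        fun h => h ▸ isTreeOn_singleton a⟩
    rw [Nat.card_congr (Equiv.subtypeEquivRight this), Nat.card_unique]
    simp
  rw [show #S - 2 = k by omega, ← card_lists_of_length_mem S k]
  refine Nat.card_eq_of_bijective (fun E => ⟨code k S E.1, E.2.length_code hk,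
    fun v hv => ((E.2.mem_code_iff hk).1 hv).1⟩) ⟨?_, ?_⟩
  · rintro ⟨E₁, h₁⟩ ⟨E₂, h₂⟩ h
    exact Subtype.ext (h₁.eq_of_code_eq h₂ hk (congrArg Subtype.val h))
  · rintro ⟨l, rfl, hl⟩
    obtain ⟨E, hT, hE⟩ := exists_isTreeOn_code_eq l hl hk
    exact ⟨⟨E, hT⟩, Subtype.ext hE⟩

lemma isTreeOn_univ_edgeFinset_iff {V : Type*} [Fintype V] [Nonempty V] (G : SimpleGraph V)
    [Fintype G.edgeSet] :
    IsTreeOn univ G.edgeFinset ↔ G.Connected ∧ G.edgeSet.ncard + 1 = Fintype.card V := by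
  rw [SimpleGraph.connected_iff, ← G.coe_edgeFinset, Set.ncard_coe_finset]
  constructor
  · intro h
    refine ⟨⟨fun u v => ?_, ‹_›⟩, by simpa using h.card_add_one⟩
    simpa using h.reachable u (mem_univ u) v (mem_univ v)
  · rintro ⟨⟨h, -⟩, hcard⟩
    exact ⟨by simp, fun e he => G.not_isDiag_of_mem_edgeSet (by simpa using he),
      fun u _ v _ => by simpa using h u v, by simpa using hcard⟩

theorem card_connected_ncard_add_one {V : Type*} [Fintype V] [LinearOrder V] [Nonempty V] :
    Nat.card {G : SimpleGraph V // G.Connected ∧ G.edgeSet.ncard + 1 = Fintype.card V} =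
      Fintype.card V ^ (Fintype.card V - 2) := by
  classical
  have hbij : Function.Bijective fun G : {G : SimpleGraph V //
      G.Connected ∧ G.edgeSet.ncard + 1 = Fintype.card V} =>
      (⟨G.1.edgeFinset, (isTreeOn_univ_edgeFinset_iff G.1).2 G.2⟩ :
        {E // IsTreeOn univ E}) := by
    refine ⟨fun G₁ G₂ h => Subtype.ext ?_, fun ⟨E, hE⟩ => ?_⟩
    · exact SimpleGraph.edgeFinset_inj.1 (congrArg Subtype.val h)
    have hG : (fromEdgeSet (E : Set (Sym2 V))).edgeFinset = E := by
      ext e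
      simpa [SimpleGraph.edgeSet_fromEdgeSet] using fun he => hE.not_isDiag e he
    exact ⟨⟨fromEdgeSet E, (isTreeOn_univ_edgeFinset_iff _).1 (by convert hE)⟩,
      Subtype.ext (by convert hG)⟩
  rw [Nat.card_eq_of_bijective _ hbij, card_isTreeOn univ_nonempty, card_univ]

end Prufer

/-- Cayley's formula: the number of labelled trees on `n ≥ 1` vertices, i.e. connected
simple graphs on `Fin n` with exactly `n - 1` edges, is `n ^ (n - 2)`. -/
theorem cayley_formula (n : ℕ) (hn : 1 ≤ n) :
    Nat.card {G : SimpleGraph (Fin n) // G.Connected ∧ G.edgeSet.ncard = n - 1} =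
      n ^ (n - 2) := by
  have : Nonempty (Fin n) := ⟨⟨0, hn⟩⟩
  have h := Prufer.card_connected_ncard_add_one (V := Fin n)
  rw [Fintype.card_fin] at h
  rw [← h]
  exact Nat.card_congr (Equiv.subtypeEquivRight fun G => and_congr_right fun _ => by omega)
end

section
/- If T(z) is the exponential generating function of rooted labelled trees, then T satisfies T(z) = z·exp(T(z)) as an identity of formal power series. -/
open PowerSeries

/-- The exponential generating function of rooted labelled trees,
`T(z) = Σ_{n≥1} n^{n-1} z^n / n!`, as a formal power series over `ℚ`. -/
noncomputable def rootedTreeGF : PowerSeries ℚ :=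
  PowerSeries.mk fun n => if n = 0 then 0 else (n : ℚ) ^ (n - 1) / n.factorial

/-- Composition `exp ∘ f` for a formal power series `f` with zero constant term:
the coefficient of `z^n` in `Σ_{k≥0} f^k / k!` (only `k ≤ n` contribute). -/
noncomputable def expComp (f : PowerSeries ℚ) : PowerSeries ℚ :=
  PowerSeries.mk fun n =>
    ∑ k ∈ Finset.range (n + 1), (k.factorial : ℚ)⁻¹ * PowerSeries.coeff n (f ^ k)

/-!
Write `T = X · F` with `F = Σ (n+1)^(n-1) z^n / n!`. Both `exp T` and `F` solve the linear
differential equation `Y' = Y · T'` with `Y(0) = 1`: for `exp T` this is the chain rule, for `F`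
it is, coefficientwise, Abel's identity
`Σ_{i+j=n} (i+1)^i/(i+1)! · (j+1)^j/j! = (n+2)^n/n!`.
Since that equation has a unique power series solution, `exp T = F`.
-/

namespace Polynomial

open Finset Nat

theorem eq_of_derivative_eq_of_eval_eq {R : Type*} [Ring R] [IsAddTorsionFree R] {p q : R[X]}
    (hd : derivative p = derivative q) {a : R} (ha : p.eval a = q.eval a) : p = q := by
  have hconst := eq_C_of_derivative_eq_zero (p := p - q) (by rw [derivative_sub, hd, sub_self])
  have hval := congrArg (eval a) hconst
  rw [eval_sub, ha, sub_self, eval_C] at hval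
  rwa [← hval, C_0, sub_eq_zero] at hconst

theorem sum_antidiagonal_neg_one_pow_div_mul_eval_eq_zero {K : Type*} [Field K] [CharZero K]
    {P : K[X]} {n : ℕ} (hP : P.natDegree < n) :
    ∑ ij ∈ antidiagonal n, (-1) ^ ij.2 / (ij.1 ! * ij.2 ! : K) * P.eval (ij.1 : K) = 0 := by
  have hΔ := fwdDiff_iter_eq_sum_shift (1 : K) P.eval n 0
  rw [fwdDiff_iter_eq_zero_of_degree_lt hP, Pi.zero_apply, eq_comm] at hΔ
  rw [Nat.sum_antidiagonal_eq_sum_range_succ (fun i j => (-1) ^ j / (i ! * j ! : K) * P.eval (i : K)),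
    ← mul_right_inj' (Nat.cast_ne_zero.mpr (factorial_ne_zero n)), mul_zero, ← hΔ, mul_sum]
  refine sum_congr rfl fun k hk => ?_
  have hkn : k ≤ n := Nat.lt_succ_iff.mp (mem_range.mp hk)
  simp only [zsmul_eq_mul, Int.cast_mul, Int.cast_pow, Int.cast_neg, Int.cast_one, Int.cast_natCast,
    Nat.cast_choose K hkn, nsmul_eq_mul, mul_one, zero_add]
  field_simp

/-- Both sides have the same derivative (that of the left side at `m + 1` is the left side at `m`
shifted by one), and both vanish at `-(m + 2)`, where the left side becomes an `(m + 1)`-st finite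
difference of the polynomial `(x + 1)^m`. -/
theorem abel_identity {K : Type*} [Field K] [CharZero K] (m : ℕ) :
    ∑ ij ∈ antidiagonal m,
        (((ij.1 : K) + 1) ^ ij.1 / (ij.1 + 1)! / ij.2 !) • (X + (ij.2 : K[X])) ^ ij.2 =
      (m ! : K)⁻¹ • (X + (m + 1 : K[X])) ^ m := by
  induction m with
  | zero => simp
  | succ m ih =>
    apply eq_of_derivative_eq_of_eval_eq (a := -((m : K) + 2))
    · have hshift := congrArg (comp · (X + 1)) ih
      simp only [sum_comp, smul_comp, pow_comp, add_comp, X_comp, natCast_comp, one_comp] at hshift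
      rw [sum_antidiagonal_succ', derivative_add, derivative_sum]
      simp only [derivative_smul, derivative_pow, derivative_add, derivative_X, derivative_natCast,
        derivative_one, CharP.cast_eq_zero, map_zero, zero_mul, smul_zero, zero_add, add_zero, mul_one,
        Nat.add_sub_cancel, C_mul', smul_smul]
      have hfactorial (k : ℕ) : ((k + 1)! : K)⁻¹ * (k + 1 : ℕ) = (k ! : K)⁻¹ := by
        rw [factorial_succ]
        push_cast
        field_simp
      convert hshift using 1
      · refine sum_congr rfl fun ij _ => ?_
        rw [div_eq_mul_inv _ ((ij.2 + 1)! : K), mul_assoc, hfactorial, ← div_eq_mul_inv]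
        congr 2
        push_cast
        ring
      · rw [hfactorial]
        congr 2
        push_cast
        ring
    · have hroot : -((m : K) + 2) + ((m + 1 : ℕ) + 1) = 0 := by push_cast; ring
      simp only [eval_finsetSum, eval_smul, eval_pow, eval_add, eval_X, eval_natCast, eval_one,
        smul_eq_mul, hroot, zero_pow (succ_ne_zero m), mul_zero]
      rw [← sum_antidiagonal_neg_one_pow_div_mul_eval_eq_zero (n := m + 1) (P := (X + 1) ^ m)
        (by rw [natDegree_pow, ← C_1, natDegree_X_add_C]; omega)]
      refine sum_congr rfl fun ⟨i, j⟩ hij => ?_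
      replace hij : i + j = m + 1 := HasAntidiagonal.mem_antidiagonal.mp hij
      have hbase : -((m : K) + 2) + j = -(i + 1) := by
        linear_combination (by exact_mod_cast hij : (i : K) + j = m + 1)
      have hpow : ((i : K) + 1) ^ i * (i + 1) ^ j = (i + 1) * (i + 1) ^ m := by
        rw [← pow_add, hij, _root_.pow_succ']
      rw [hbase, neg_pow]
      simp only [eval_pow, eval_add, eval_X, eval_one]
      rw [factorial_succ, cast_mul, cast_succ]
      field_simp
      rw [hpow]

end Polynomial

namespace PowerSeries

theorem eq_zero_of_derivative_eq_mul {R : Type*} [CommRing R] [IsAddTorsionFree R] {u h : R⟦X⟧}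
    (hu : d⁄dX R u = u * h) (h0 : constantCoeff u = 0) : u = 0 := by
  ext n
  induction n using Nat.strong_induction_on with
  | _ n ih =>
    rcases n with _ | n
    · rw [coeff_zero_eq_constantCoeff_apply, h0, map_zero]
    · have key := congrArg (coeff n) hu
      rw [coeff_derivative, coeff_mul, Finset.sum_eq_zero] at key
      · have : (n + 1) • coeff (n + 1) u = 0 := by rwa [nsmul_eq_mul, mul_comm, Nat.cast_succ]
        simpa using nsmul_eq_zero_iff.mp this
      · intro p hp
        rw [ih p.1 (Finset.Nat.antidiagonal.fst_lt hp), map_zero, zero_mul]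

theorem eq_of_derivative_eq_mul {R : Type*} [CommRing R] [IsAddTorsionFree R] {f g h : R⟦X⟧}
    (hf : d⁄dX R f = f * h) (hg : d⁄dX R g = g * h) (h0 : constantCoeff f = constantCoeff g) :
    f = g :=
  sub_eq_zero.mp <| eq_zero_of_derivative_eq_mul (by rw [map_sub, hf, hg, sub_mul])
    (by rw [map_sub, h0, sub_self])

end PowerSeries

theorem constantCoeff_expComp (f : ℚ⟦X⟧) : constantCoeff (expComp f) = 1 := by
  simp [expComp]

theorem expComp_eq_subst {f : ℚ⟦X⟧} (hf : constantCoeff f = 0) :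
    expComp f = (exp ℚ).subst f := by
  have hvanish {n k : ℕ} (hnk : n < k) : coeff n (f ^ k) = 0 :=
    coeff_of_lt_order _ <| (le_order_pow_of_constantCoeff_eq_zero k hf).trans_lt' <| by
      exact_mod_cast hnk
  ext n
  rw [expComp, coeff_mk, coeff_subst' (HasSubst.of_constantCoeff_zero' hf),
    finsum_eq_sum_of_support_subset (s := Finset.range (n + 1))]
  · simp [div_eq_inv_mul]
  · intro k hk
    contrapose! hk
    rw [Function.notMem_support, hvanish (by simpa using hk), smul_zero]

theorem derivative_expComp {f : ℚ⟦X⟧} (hf : constantCoeff f = 0) :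
    d⁄dX ℚ (expComp f) = expComp f * d⁄dX ℚ f := by
  rw [expComp_eq_subst hf, derivative_subst (HasSubst.of_constantCoeff_zero' hf), derivative_exp]

open Nat

/-- `(n + 1)^n / (n + 1)! = (n + 1)^(n - 1) / n!`, where `(n + 1)^(n - 1)` counts the rooted forests
on `n` labelled vertices. -/
noncomputable def rootedForestGF : ℚ⟦X⟧ :=
  mk fun n => ((n : ℚ) + 1) ^ n / (n + 1)!

theorem coeff_rootedTreeGF_succ (n : ℕ) :
    coeff (n + 1) rootedTreeGF = ((n : ℚ) + 1) ^ n / (n + 1)! := by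
  simp [rootedTreeGF]

theorem rootedTreeGF_eq_X_mul_rootedForestGF : rootedTreeGF = X * rootedForestGF := by
  ext (_ | n)
  · simp [rootedTreeGF]
  · rw [coeff_succ_X_mul, coeff_rootedTreeGF_succ, rootedForestGF, coeff_mk]

theorem constantCoeff_rootedTreeGF : constantCoeff rootedTreeGF = 0 := by
  rw [rootedTreeGF_eq_X_mul_rootedForestGF, map_mul, constantCoeff_X, zero_mul]

theorem derivative_rootedForestGF :
    d⁄dX ℚ rootedForestGF = rootedForestGF * d⁄dX ℚ rootedTreeGF := by
  ext n
  have habel := congrArg (Polynomial.eval 1) (Polynomial.abel_identity (K := ℚ) n)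
  simp only [Polynomial.eval_finsetSum, Polynomial.eval_smul, Polynomial.eval_pow,
    Polynomial.eval_add, Polynomial.eval_X, Polynomial.eval_natCast, Polynomial.eval_one,
    smul_eq_mul] at habel
  simp only [coeff_derivative, coeff_mul, rootedForestGF, coeff_mk, coeff_rootedTreeGF_succ]
  convert habel.symm using 1
  · rw [factorial_succ, factorial_succ]
    push_cast
    field_simp
    ring
  · refine Finset.sum_congr rfl fun ij _ => ?_
    rw [factorial_succ ij.2]
    push_cast
    field_simp
    ring

theorem expComp_rootedTreeGF : expComp rootedTreeGF = rootedForestGF :=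
  eq_of_derivative_eq_mul (derivative_expComp constantCoeff_rootedTreeGF) derivative_rootedForestGF
    (by simp [constantCoeff_expComp, rootedForestGF])

/-- The rooted-tree generating function satisfies `T(z) = z · exp(T(z))` as an identity
of formal power series over `ℚ`. -/
theorem rootedTreeGF_eq_X_mul_exp :
    rootedTreeGF = PowerSeries.X * expComp rootedTreeGF := by
  rw [expComp_rootedTreeGF]
  exact rootedTreeGF_eq_X_mul_rootedForestGF
end

section
/- The exponential generating function U(z) of labelled (unrooted) trees satisfies U(z) = T(z) − T(z)^2/2, where T(z) is the exponential generating function of rooted labelled trees. -/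
/-- The exponential generating function of (unrooted) labelled trees,
`U(z) = Σ_{n≥1} n^{n-2} z^n / n!`. -/
noncomputable def treeGF : PowerSeries ℚ :=
  PowerSeries.mk fun n => if n = 0 then 0 else (n : ℚ) ^ (n - 2) / n.factorial

/-!
The Abel polynomials `A n x = x (x + n) ^ (n - 1)` are of binomial type,
`A n (x + y) = ∑ (n choose k) A k x * A (n - k) y`: both sides agree at `y = 0`, and since
`A (n + 1)' = (n + 1) A n (· + 1)` their `y`-derivatives are `n + 1` times the identity of rank `n`
shifted by one. The coefficient of `x` in `A n` is `n ^ (n - 1)`, the number of rooted labelled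
trees, and that of `x ^ 2` is `(n - 1) n ^ (n - 2)`. Comparing coefficients of `x ^ 2` in
`A n (2 x) = ∑ (n choose k) A k x * A (n - k) x` yields
`∑ (n choose k) k ^ (k - 1) (n - k) ^ (n - k - 1) = 2 (n - 1) n ^ (n - 2)`, that is,
`n! [z ^ n] T ^ 2 = 2 (n ^ (n - 1) - n ^ (n - 2))`, the coefficientwise form of `U = T - T ^ 2 / 2`.
-/

open Polynomial Finset
open scoped Nat

variable {R : Type*}

def abelPoly [CommSemiring R] (n : ℕ) (x : R) : R := if n = 0 then 1 else x * (x + n) ^ (n - 1)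

section CommSemiring

variable [CommSemiring R]

@[simp]
lemma abelPoly_zero (x : R) : abelPoly 0 x = 1 := if_pos rfl

lemma abelPoly_succ (n : ℕ) (x : R) : abelPoly (n + 1) x = x * (x + (n + 1)) ^ n := by
  simp [abelPoly]

@[simp]
lemma abelPoly_succ_zero (n : ℕ) : abelPoly (n + 1) (0 : R) = 0 := by
  simp [abelPoly_succ]

lemma map_abelPoly {S : Type*} [CommSemiring S] (f : R →+* S) (n : ℕ) (x : R) :
    f (abelPoly n x) = abelPoly n (f x) := by
  cases n <;> simp [abelPoly_succ]

lemma eval_abelPoly (n : ℕ) (y : R) (p : R[X]) : (abelPoly n p).eval y = abelPoly n (p.eval y) :=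
  map_abelPoly (evalRingHom y) n p

lemma abelPoly_comp (n : ℕ) (p q : R[X]) : (abelPoly n p).comp q = abelPoly n (p.comp q) :=
  map_abelPoly (compRingHom q) n p

lemma derivative_abelPoly_succ (n : ℕ) :
    derivative (abelPoly (n + 1) (X : R[X])) = (n + 1 : R[X]) * abelPoly n (X + 1) := by
  rcases n with _ | n
  · simp [abelPoly_succ]
  · simp only [abelPoly_succ, derivative_mul, derivative_X, derivative_pow, derivative_add,
      derivative_natCast, derivative_one, add_zero, one_mul, map_natCast]
    push_cast
    ring

lemma coeff_zero_abelPoly (n : ℕ) : (abelPoly n (X : R[X])).coeff 0 = abelPoly n 0 := by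
  rw [coeff_zero_eq_eval_zero, eval_abelPoly, eval_X]

lemma coeff_one_abelPoly_succ (n : ℕ) : (abelPoly (n + 1) (X : R[X])).coeff 1 = (n + 1) ^ n := by
  rw [abelPoly_succ, coeff_X_mul, ← Nat.cast_succ, ← C_eq_natCast, coeff_X_add_C_pow]
  simp

lemma coeff_two_abelPoly_succ (n : ℕ) :
    (abelPoly (n + 1) (X : R[X])).coeff 2 = n * (n + 1) ^ (n - 1) := by
  rw [abelPoly_succ, coeff_X_mul, ← Nat.cast_succ, ← C_eq_natCast, coeff_X_add_C_pow]
  simp [mul_comm]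

lemma sum_antidiagonal_abelPoly_zero_mul (f : ℕ × ℕ → R) (n : ℕ) :
    ∑ p ∈ antidiagonal n, abelPoly p.1 (0 : R) * f p = f (0, n) := by
  cases n <;> simp [Nat.sum_antidiagonal_succ]

lemma sum_antidiagonal_mul_abelPoly_zero (f : ℕ × ℕ → R) (n : ℕ) :
    ∑ p ∈ antidiagonal n, f p * abelPoly p.2 (0 : R) = f (n, 0) := by
  cases n <;> simp [Nat.sum_antidiagonal_succ']

end CommSemiring

section TorsionFree

variable [CommRing R] [IsAddTorsionFree R]

lemma Polynomial.eq_of_derivative_eq_of_eval_zero_eq {p q : R[X]}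
    (hd : derivative p = derivative q) (h0 : p.eval 0 = q.eval 0) : p = q := by
  have hc : natDegree (p - q) = 0 := by rw [← derivative_eq_zero, derivative_sub, hd, sub_self]
  rw [← sub_eq_zero, eq_C_of_natDegree_eq_zero hc, coeff_zero_eq_eval_zero, eval_sub, h0,
    sub_self, C_0]

theorem abelPoly_C_add_X (x : R) (n : ℕ) :
    abelPoly n (C x + X) =
      ∑ p ∈ antidiagonal n, (n.choose p.1 : R[X]) * C (abelPoly p.1 x) * abelPoly p.2 X := by
  induction n with
  | zero => simp
  | succ n ih =>
    have hshift : abelPoly n (C x + X + 1) = ∑ p ∈ antidiagonal n,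
        (n.choose p.1 : R[X]) * C (abelPoly p.1 x) * abelPoly p.2 (X + 1) := by
      have := congrArg (·.comp (X + 1)) ih
      simpa only [abelPoly_comp, Polynomial.sum_comp, mul_comp, natCast_comp, C_comp, add_comp,
        X_comp, add_assoc] using this
    refine eq_of_derivative_eq_of_eval_zero_eq ?_ ?_
    · calc derivative (abelPoly (n + 1) (C x + X))
          = (n + 1) * abelPoly n (C x + X + 1) := by
            rw [← X_comp (p := C x + X), ← abelPoly_comp, derivative_comp,
              derivative_abelPoly_succ]
            simp [abelPoly_comp, add_assoc]
        _ = ∑ p ∈ antidiagonal n, ((n + 1).choose p.1 : R[X]) * C (abelPoly p.1 x) *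
              (((p.2 : R[X]) + 1) * abelPoly p.2 (X + 1)) := by
            rw [hshift, mul_sum]
            refine sum_congr rfl fun p hp => ?_
            have hsub : n + 1 - p.1 = p.2 + 1 := by rw [← mem_antidiagonal.mp hp]; omega
            have hchoose : ((n + 1).choose p.1 : R[X]) * (p.2 + 1) = (n + 1) * n.choose p.1 := by
              exact_mod_cast by rw [← hsub, ← Nat.choose_mul_succ_eq, mul_comm]
            linear_combination (-C (abelPoly p.1 x) * abelPoly p.2 (X + 1)) * hchoose
        _ = _ := by
            rw [derivative_sum, Nat.sum_antidiagonal_succ']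
            simp [derivative_abelPoly_succ]
    · simp [eval_finsetSum, eval_abelPoly, Nat.sum_antidiagonal_succ']

theorem abelPoly_add (n : ℕ) (x y : R) :
    abelPoly n (x + y) =
      ∑ p ∈ antidiagonal n, (n.choose p.1 : R) * abelPoly p.1 x * abelPoly p.2 y := by
  simpa [eval_finsetSum, eval_abelPoly] using congrArg (eval y) (abelPoly_C_add_X x n)

end TorsionFree

theorem sum_antidiagonal_choose_mul_coeff_one_abelPoly [CommRing R] [IsDomain R] [CharZero R]
    (n : ℕ) :
    ∑ p ∈ antidiagonal n,
        (n.choose p.1 : R) * (abelPoly p.1 (X : R[X])).coeff 1 * (abelPoly p.2 (X : R[X])).coeff 1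
      = 2 * (abelPoly n (X : R[X])).coeff 2 := by
  have h := congrArg (coeff · 2) (abelPoly_add n (X : R[X]) X)
  have hscale : (X + X : R[X]) = X.comp (C 2 * X) := by rw [X_comp, C_ofNat, two_mul]
  simp only [hscale, ← abelPoly_comp, comp_C_mul_X_coeff, finsetSum_coeff, mul_assoc,
    coeff_natCast_mul] at h
  simp only [coeff_mul, Nat.sum_antidiagonal_succ, Nat.antidiagonal_zero, sum_singleton,
    coeff_zero_abelPoly, mul_add, sum_add_distrib, zero_add, Nat.reduceAdd, ← mul_assoc] at h
  have hleft : ∑ p ∈ antidiagonal n,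
      (n.choose p.1 : R) * abelPoly p.1 0 * (abelPoly p.2 (X : R[X])).coeff 2
        = (abelPoly n (X : R[X])).coeff 2 := by
    simp_rw [mul_comm (n.choose _ : R), mul_assoc]
    simp [sum_antidiagonal_abelPoly_zero_mul]
  have hright : ∑ p ∈ antidiagonal n,
      (n.choose p.1 : R) * (abelPoly p.1 (X : R[X])).coeff 2 * abelPoly p.2 0
        = (abelPoly n (X : R[X])).coeff 2 := by
    simp [sum_antidiagonal_mul_abelPoly_zero]
  linear_combination -h - hleft - hright

lemma PowerSeries.coeff_mk_div_factorial_mul {K : Type*} [Field K] [CharZero K] (a b : ℕ → K)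
    (n : ℕ) :
    coeff n (mk (fun i => a i / i !) * mk (fun j => b j / j !)) =
      (∑ p ∈ antidiagonal n, n.choose p.1 * a p.1 * b p.2) / n ! := by
  rw [coeff_mul, sum_div]
  refine sum_congr rfl fun ⟨i, j⟩ hij => ?_
  rw [← mem_antidiagonal.mp hij, coeff_mk, coeff_mk,
    ← Nat.add_choose_mul_factorial_mul_factorial, ← Nat.choose_symm_add]
  have : ((i + j).choose i : K) ≠ 0 := by
    exact_mod_cast (Nat.choose_pos (Nat.le_add_right i j)).ne'
  push_cast
  field_simp

lemma rootedTreeGF_eq_mk :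
    rootedTreeGF = PowerSeries.mk fun n => (abelPoly n (X : ℚ[X])).coeff 1 / n ! := by
  ext (_ | n) <;> simp [rootedTreeGF, coeff_one, coeff_one_abelPoly_succ]

lemma coeff_treeGF (n : ℕ) :
    PowerSeries.coeff n treeGF =
      ((abelPoly n (X : ℚ[X])).coeff 1 - (abelPoly n (X : ℚ[X])).coeff 2) / n ! := by
  rcases n with _ | _ | n
  · simp [treeGF, coeff_one]
  · simp [treeGF, coeff_one_abelPoly_succ, coeff_two_abelPoly_succ]
  · simp only [treeGF, PowerSeries.coeff_mk, coeff_one_abelPoly_succ, coeff_two_abelPoly_succ]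
    push_cast
    ring

/-- `U(z) = T(z) - T(z)^2 / 2`. -/
theorem treeGF_eq :
    treeGF = rootedTreeGF - PowerSeries.C (1 / 2 : ℚ) * rootedTreeGF ^ 2 := by
  ext n
  rw [map_sub, PowerSeries.coeff_C_mul, sq, rootedTreeGF_eq_mk,
    PowerSeries.coeff_mk_div_factorial_mul, sum_antidiagonal_choose_mul_coeff_one_abelPoly,
    PowerSeries.coeff_mk, coeff_treeGF]
  ring
end

section
/- For any fixed excess k ≥ 1, there are only finitely many isomorphism types (equivalently, finitely many labelled multigraphs up to the natural size bound) of multigraphs with minimum degree at least 3 and excess exactly k; in particular any such multigraph has at most 2k vertices and at most 3k edges. -/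
/-!
Handshake: the degrees sum to `2m`, so minimum degree `3` gives `3n ≤ 2m`; with `m = n + k`
this forces `n ≤ 2k` and `m ≤ 3k`. Only finitely many sizes remain, and for each size there are
finitely many edge maps.
-/

open Finset

/-- The degree of vertex `v` in the multigraph on `Fin n` with labelled oriented edges
`ends : Fin m → Fin n × Fin n` (a loop counts twice). -/
def mgDeg {n m : ℕ} (ends : Fin m → Fin n × Fin n) (v : Fin n) : ℕ :=
  (univ.filter fun e => (ends e).1 = v).card + (univ.filter fun e => (ends e).2 = v).card

theorem sum_mgDeg {n m : ℕ} (ends : Fin m → Fin n × Fin n) : ∑ v, mgDeg ends v = 2 * m := by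
  have fibres (f : Fin m → Fin n) : ∑ v, (univ.filter fun e => f e = v).card = m := by
    rw [← card_eq_sum_card_fiberwise fun e _ => mem_univ (f e), card_univ, Fintype.card_fin]
  simp only [mgDeg, sum_add_distrib, fibres]
  ring

theorem three_mul_le_two_mul_of_three_le_mgDeg {n m : ℕ} (ends : Fin m → Fin n × Fin n)
    (hd : ∀ v, 3 ≤ mgDeg ends v) : 3 * n ≤ 2 * m :=
  calc 3 * n = ∑ _v : Fin n, 3 := by simp [mul_comm]
    _ ≤ ∑ v, mgDeg ends v := sum_le_sum fun v _ => hd v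
    _ = 2 * m := sum_mgDeg ends

theorem finite_sigma_sigma_of_bounded {β : ℕ → ℕ → Type*} [∀ n m, Finite (β n m)] (N M : ℕ)
    (hbound : ∀ n m, β n m → n ≤ N ∧ m ≤ M) : Finite ((n : ℕ) × (m : ℕ) × β n m) := by
  let restrict : ((n : Fin (N + 1)) × (m : Fin (M + 1)) × β n m) → (n : ℕ) × (m : ℕ) × β n m :=
    fun x => ⟨x.1, x.2.1, x.2.2⟩
  refine Finite.of_surjective restrict fun ⟨n, m, b⟩ => ?_
  obtain ⟨hn, hm⟩ := hbound n m b
  exact ⟨⟨⟨n, Nat.lt_succ_of_le hn⟩, ⟨m, Nat.lt_succ_of_le hm⟩, b⟩, rfl⟩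

theorem minDegThree_fixed_excess_finite_general (k : ℕ) :
    Finite ((n : ℕ) × (m : ℕ) ×
        {ends : Fin m → Fin n × Fin n // (∀ v, 3 ≤ mgDeg ends v) ∧ m = n + k}) ∧
      ∀ (n m : ℕ) (ends : Fin m → Fin n × Fin n),
        (∀ v, 3 ≤ mgDeg ends v) → m = n + k → n ≤ 2 * k ∧ m ≤ 3 * k := by
  have bounds (n m : ℕ) (ends : Fin m → Fin n × Fin n) (hd : ∀ v, 3 ≤ mgDeg ends v)
      (hm : m = n + k) : n ≤ 2 * k ∧ m ≤ 3 * k := by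
    have := three_mul_le_two_mul_of_three_le_mgDeg ends hd
    omega
  exact ⟨finite_sigma_sigma_of_bounded (2 * k) (3 * k) fun n m x => bounds n m x.1 x.2.1 x.2.2,
    bounds⟩

/-- For fixed excess `k ≥ 1` there are only finitely many (labelled) multigraphs with
minimum degree at least `3` and excess exactly `k`; in particular any such multigraph
has at most `2k` vertices and at most `3k` edges. -/
theorem minDegThree_fixed_excess_finite (k : ℕ) (hk : 1 ≤ k) :
    Finite ((n : ℕ) × (m : ℕ) ×
        {ends : Fin m → Fin n × Fin n // (∀ v, 3 ≤ mgDeg ends v) ∧ m = n + k}) ∧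
      ∀ (n m : ℕ) (ends : Fin m → Fin n × Fin n),
        (∀ v, 3 ≤ mgDeg ends v) → m = n + k → n ≤ 2 * k ∧ m ≤ 3 * k :=
  minDegThree_fixed_excess_finite_general k
end

section
/- For every fixed natural number d ≥ 1, there is a constant C such that for all sufficiently large k, Σ_{r=d}^{k−d} ((2(k−r)−1)!! (2r−1)!!)/(2k−1)!! ≤ C · k^{−d}. -/
/-!
Let `t k r = (2(k-r)-1)!! (2r-1)!! / (2k-1)!!` (`ddfRatio k r`). Passing from `r` to `r + 1`
multiplies `t k r` by `(2r+1)/(2(k-r)-1)`, which is at most `(2r+1)/k` on the first half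
`2r+1 ≤ k`. Hence `t k` is symmetric, decreasing on the first half, and `t k j ≤ ((2d+1)/k)^j`
for `j ≤ d + 1`. The two extreme terms `r = d, k - d` are thus `O(k^{-d})`, and each of the at
most `k` inner terms is at most `t k (d+1) = O(k^{-d-1})`.
-/

/-- The double factorial `(2n-1)!! = (2n)!/(2^n n!)` as a real number. -/
noncomputable def ddf (n : ℕ) : ℝ := ((2 * n).factorial : ℝ) / (2 ^ n * n.factorial)

open Finset

theorem Finset.sum_Icc_eq_add_sum_Icc_add {M : Type*} [AddCommMonoid M] (f : ℕ → M)
    {a b : ℕ} (h : a < b) :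
    ∑ r ∈ Icc a b, f r = f a + ∑ r ∈ Icc (a + 1) (b - 1), f r + f b := by
  obtain ⟨c, rfl⟩ : ∃ c, b = c + 1 := ⟨b - 1, by omega⟩
  rw [sum_Icc_succ_top (by omega), Icc_eq_cons_Ioc (by omega), sum_cons,
    ← Icc_add_one_left_eq_Ioc, Nat.add_sub_cancel]

lemma ddf_pos (n : ℕ) : 0 < ddf n := by
  unfold ddf
  positivity

lemma ddf_zero : ddf 0 = 1 := by simp [ddf]

lemma ddf_succ (n : ℕ) : ddf (n + 1) = (2 * n + 1) * ddf n := by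
  unfold ddf
  rw [show 2 * (n + 1) = 2 * n + 1 + 1 by ring, Nat.factorial_succ, Nat.factorial_succ,
    Nat.factorial_succ]
  field_simp
  push_cast
  ring

noncomputable def ddfRatio (k r : ℕ) : ℝ := ddf (k - r) * ddf r / ddf k

lemma ddfRatio_pos (k r : ℕ) : 0 < ddfRatio k r :=
  div_pos (mul_pos (ddf_pos _) (ddf_pos _)) (ddf_pos _)

lemma ddfRatio_zero (k : ℕ) : ddfRatio k 0 = 1 := by
  rw [ddfRatio, Nat.sub_zero, ddf_zero, mul_one, div_self (ddf_pos k).ne']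

lemma ddfRatio_sub {k r : ℕ} (h : r ≤ k) : ddfRatio k (k - r) = ddfRatio k r := by
  rw [ddfRatio, ddfRatio, Nat.sub_sub_self h, mul_comm]

lemma ddfRatio_succ_mul (r m : ℕ) :
    ddfRatio (r + 1 + m) (r + 1) * (2 * m + 1) = ddfRatio (r + 1 + m) r * (2 * r + 1) := by
  rw [ddfRatio, ddfRatio, show r + 1 + m - (r + 1) = m by omega,
    show r + 1 + m - r = m + 1 by omega, ddf_succ m, ddf_succ r]
  ring

lemma ddfRatio_succ_le {k r : ℕ} (h : 2 * r + 1 ≤ k) :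
    ddfRatio k (r + 1) ≤ ddfRatio k r * ((2 * r + 1) / k) := by
  obtain ⟨m, rfl⟩ : ∃ m, k = r + 1 + m := ⟨k - (r + 1), by omega⟩
  have hm : ((r + 1 + m : ℕ) : ℝ) ≤ 2 * m + 1 := by norm_cast; omega
  calc ddfRatio (r + 1 + m) (r + 1)
      = ddfRatio (r + 1 + m) r * (2 * r + 1) / (2 * m + 1) := by
        rw [← ddfRatio_succ_mul, mul_div_cancel_right₀ _ (by positivity)]
    _ ≤ ddfRatio (r + 1 + m) r * ((2 * r + 1) / (r + 1 + m : ℕ)) := by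
        rw [mul_div_assoc]
        gcongr
        exact (ddfRatio_pos _ _).le

lemma ddfRatio_le_ddfRatio_of_le {k a b : ℕ} (hab : a ≤ b) (hb : 2 * b ≤ k + 1) :
    ddfRatio k b ≤ ddfRatio k a := by
  induction b, hab using Nat.le_induction with
  | base => exact le_rfl
  | succ n _ ih =>
    have hn : 2 * n + 1 ≤ k := by omega
    have hfactor : (2 * n + 1 : ℝ) / k ≤ 1 := by
      rw [div_le_one (by exact_mod_cast (show 0 < k by omega))]; exact_mod_cast hn
    calc ddfRatio k (n + 1) ≤ ddfRatio k n * ((2 * n + 1) / k) := ddfRatio_succ_le hn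
      _ ≤ ddfRatio k n := mul_le_of_le_one_right (ddfRatio_pos k n).le hfactor
      _ ≤ ddfRatio k a := ih (by omega)

lemma ddfRatio_le_pow {k a j : ℕ} (hk : 2 * a + 1 ≤ k) (hj : j ≤ a + 1) :
    ddfRatio k j ≤ ((2 * a + 1) / k : ℝ) ^ j := by
  induction j with
  | zero => rw [ddfRatio_zero, pow_zero]
  | succ j ih =>
    have hja : (2 * j + 1 : ℝ) ≤ 2 * a + 1 := by norm_cast; omega
    calc ddfRatio k (j + 1) ≤ ddfRatio k j * ((2 * j + 1) / k) := ddfRatio_succ_le (by omega)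
      _ ≤ ((2 * a + 1) / k : ℝ) ^ j * ((2 * a + 1) / k) := by
        gcongr
        exact ih (by omega)
      _ = ((2 * a + 1) / k : ℝ) ^ (j + 1) := (pow_succ _ _).symm

lemma ddfRatio_le_pow_of_mem_Icc {k d r : ℕ} (hk : 2 * d + 1 ≤ k)
    (hr : r ∈ Icc (d + 1) (k - d - 1)) :
    ddfRatio k r ≤ ((2 * d + 1) / k : ℝ) ^ (d + 1) := by
  rw [mem_Icc] at hr
  refine le_trans ?_ (ddfRatio_le_pow hk le_rfl)
  rcases le_or_gt (2 * r) (k + 1) with hfirst | hsecond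
  · exact ddfRatio_le_ddfRatio_of_le hr.1 hfirst
  · rw [← ddfRatio_sub (show r ≤ k by omega)]
    exact ddfRatio_le_ddfRatio_of_le (by omega) (by omega)

theorem sum_doubleFactorial_ratio_bound_general (d : ℕ) :
    ∃ C : ℝ, ∃ K : ℕ, ∀ k : ℕ, K ≤ k →
      ∑ r ∈ Finset.Icc d (k - d), ddf (k - r) * ddf r / ddf k ≤ C / (k : ℝ) ^ d := by
  refine ⟨(2 * d + 3) * (2 * d + 1) ^ d, 2 * d + 1, fun k hk => ?_⟩
  set B : ℝ := (2 * d + 1) / k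
  have hk0 : (0 : ℝ) < k := by exact_mod_cast (show 0 < k by omega)
  have hleft : ddfRatio k d ≤ B ^ d := ddfRatio_le_pow hk (by omega)
  have hright : ddfRatio k (k - d) ≤ B ^ d := (ddfRatio_sub (by omega)).trans_le hleft
  have hinner : ∑ r ∈ Icc (d + 1) (k - d - 1), ddfRatio k r ≤ k * B ^ (d + 1) := by
    calc ∑ r ∈ Icc (d + 1) (k - d - 1), ddfRatio k r
        ≤ #(Icc (d + 1) (k - d - 1)) • B ^ (d + 1) :=
          sum_le_card_nsmul _ _ _ fun r hr => ddfRatio_le_pow_of_mem_Icc hk hr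
      _ ≤ k * B ^ (d + 1) := by
          rw [nsmul_eq_mul, Nat.card_Icc]
          gcongr
          omega
  calc ∑ r ∈ Icc d (k - d), ddf (k - r) * ddf r / ddf k
      = ddfRatio k d + ∑ r ∈ Icc (d + 1) (k - d - 1), ddfRatio k r + ddfRatio k (k - d) :=
        sum_Icc_eq_add_sum_Icc_add (ddfRatio k) (by omega)
    _ ≤ B ^ d + k * B ^ (d + 1) + B ^ d := by gcongr
    _ = (2 * d + 3) * (2 * d + 1) ^ d / (k : ℝ) ^ d := by
        simp only [B, div_pow, pow_succ]
        field_simp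
        ring

/-- For every fixed `d ≥ 1` there is a constant `C` such that for all sufficiently
large `k`, `Σ_{r=d}^{k-d} (2(k-r)-1)!!(2r-1)!!/(2k-1)!! ≤ C k^{-d}`. -/
theorem sum_doubleFactorial_ratio_bound (d : ℕ) (hd : 1 ≤ d) :
    ∃ C : ℝ, ∃ K : ℕ, ∀ k : ℕ, K ≤ k →
      ∑ r ∈ Finset.Icc d (k - d), ddf (k - r) * ddf r / ddf k ≤ C / (k : ℝ) ^ d :=
  sum_doubleFactorial_ratio_bound_general d
end
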